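/- arXiv:0908.0302 — 6 statements merged into one kernel-verified Lean document; each statement's English description precedes it below -/
import Mathlib

section
/- For a q-ary input discrete channel W with symmetric capacity I(W) = Σ_x Σ_y (1/q) W(y|x) log_q( W(y|x) / ((1/q) Σ_{x'} W(y|x')) ), one has I(W) ≥ log_q( q / (1 + (q-1) Z(W)) ), where Z(W) is the average Bhattacharyya parameter. -/
open Finset

/-- Symmetric capacity of a channel with uniform input, in base-`q` logarithm
(`q` = input alphabet size). -/
noncomputable def symCapQ {X Y : Type*} [Fintype X] [Fintype Y] (W : X → Y → ℝ) : ℝ :=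
  (∑ x, ∑ y, (Fintype.card X : ℝ)⁻¹ * W x y *
      Real.log (W x y / ((Fintype.card X : ℝ)⁻¹ * ∑ x', W x' y))) /
    Real.log (Fintype.card X)

/-- Average Bhattacharyya parameter of a channel. -/
noncomputable def Zavg {X Y : Type*} [Fintype X] [Fintype Y] [DecidableEq X]
    (W : X → Y → ℝ) : ℝ :=
  ((Fintype.card X : ℝ) * ((Fintype.card X : ℝ) - 1))⁻¹ *
    ∑ x, ∑ x' ∈ univ.filter (· ≠ x), ∑ y, Real.sqrt (W x y * W x' y)

open Real

/-!
In nats, `I(W)` is the Kullback–Leibler divergence `D(p ‖ r)` between the joint law `p` of a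
uniform input and its output and the product `r` of the two marginals. Averaging
`log t ≤ t - 1` at `t = √(r/p) / C` against `p` gives `D(p ‖ r) ≥ -2 log C` for every `C`
bounding the Bhattacharyya coefficient `∑ √(p r)`. Here `∑ √(p r) = q⁻¹ ∑_y √(P y) ∑_x √(W x y)`
with `P` the output law, and Cauchy–Schwarz bounds its square by `q⁻² ∑_y (∑_x √(W x y))²`;
expanding the square, the diagonal terms contribute `q` and the off-diagonal ones
`q (q - 1) Z(W)`.
-/

theorem neg_two_mul_mul_log_le {p r C : ℝ} (hp : 0 ≤ p) (hr : 0 ≤ r) (hpr : r = 0 → p = 0)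
    (hC : 0 < C) : -2 * p * log C ≤ p * log (p / r) + 2 * (√(p * r) / C - p) := by
  rcases hp.eq_or_lt with rfl | hp
  · simp
  have hr : 0 < r := hr.lt_of_ne fun h => hp.ne' (hpr h.symm)
  have key := log_le_sub_one_of_pos (x := √(p * r) / (p * C)) (by positivity)
  rw [log_div (by positivity) (by positivity), log_sqrt (by positivity),
    log_mul hp.ne' hr.ne', log_mul hp.ne' hC.ne'] at key
  have hcancel : p * (√(p * r) / (p * C)) = √(p * r) / C := by field_simp
  rw [log_div hp.ne' hr.ne']
  linear_combination 2 * mul_le_mul_of_nonneg_left key hp.le + 2 * hcancel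

theorem neg_two_mul_log_le_sum_mul_log_div {ι : Type*} [Fintype ι] {p r : ι → ℝ} {C : ℝ}
    (hp : ∀ i, 0 ≤ p i) (hr : ∀ i, 0 ≤ r i) (hp1 : ∑ i, p i = 1)
    (hpr : ∀ i, r i = 0 → p i = 0) (hC : 0 < C) (hBC : ∑ i, √(p i * r i) ≤ C) :
    -2 * log C ≤ ∑ i, p i * log (p i / r i) := by
  have hratio : (∑ i, √(p i * r i)) / C ≤ 1 := (div_le_one hC).2 hBC
  calc -2 * log C = ∑ i, -2 * p i * log C := by
        rw [← sum_mul, ← mul_sum, hp1, mul_one]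
    _ ≤ ∑ i, (p i * log (p i / r i) + 2 * (√(p i * r i) / C - p i)) :=
        sum_le_sum fun i _ => neg_two_mul_mul_log_le (hp i) (hr i) (hpr i) hC
    _ = ∑ i, p i * log (p i / r i) + 2 * ((∑ i, √(p i * r i)) / C - 1) := by
        rw [sum_add_distrib, ← mul_sum, sum_sub_distrib, ← sum_div, hp1]
    _ ≤ ∑ i, p i * log (p i / r i) := by linarith

section Channel

variable {X Y : Type*} [Fintype X]

noncomputable def outputDist (W : X → Y → ℝ) (y : Y) : ℝ :=
  (Fintype.card X : ℝ)⁻¹ * ∑ x, W x y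

noncomputable def jointDist (W : X → Y → ℝ) (z : X × Y) : ℝ :=
  (Fintype.card X : ℝ)⁻¹ * W z.1 z.2

noncomputable def prodDist (W : X → Y → ℝ) (z : X × Y) : ℝ :=
  (Fintype.card X : ℝ)⁻¹ * outputDist W z.2

theorem outputDist_nonneg {W : X → Y → ℝ} (hnn : ∀ x y, 0 ≤ W x y) (y : Y) :
    0 ≤ outputDist W y :=
  mul_nonneg (inv_nonneg.2 (Nat.cast_nonneg _)) (sum_nonneg fun x _ => hnn x y)

theorem jointDist_eq_zero_of_prodDist_eq_zero [Nonempty X] {W : X → Y → ℝ}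
    (hnn : ∀ x y, 0 ≤ W x y) (z : X × Y) (hz : prodDist W z = 0) : jointDist W z = 0 := by
  simp only [prodDist, outputDist, mul_eq_zero, inv_eq_zero, Nat.cast_eq_zero,
    Fintype.card_ne_zero, false_or] at hz
  rw [jointDist, (sum_eq_zero_iff_of_nonneg fun x _ => hnn x z.2).1 hz z.1 (mem_univ _),
    mul_zero]

theorem jointDist_nonneg {W : X → Y → ℝ} (hnn : ∀ x y, 0 ≤ W x y) (z : X × Y) :
    0 ≤ jointDist W z :=
  mul_nonneg (inv_nonneg.2 (Nat.cast_nonneg _)) (hnn _ _)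

theorem prodDist_nonneg {W : X → Y → ℝ} (hnn : ∀ x y, 0 ≤ W x y) (z : X × Y) :
    0 ≤ prodDist W z :=
  mul_nonneg (inv_nonneg.2 (Nat.cast_nonneg _)) (outputDist_nonneg hnn _)

variable [Fintype Y]

theorem sum_sq_sum_sqrt_eq_card_add [DecidableEq X] {W : X → Y → ℝ} (hnn : ∀ x y, 0 ≤ W x y)
    (hsum : ∀ x, ∑ y, W x y = 1) :
    ∑ y, (∑ x, √(W x y)) ^ 2 =
      Fintype.card X + ∑ x, ∑ x' ∈ univ.filter (· ≠ x), ∑ y, √(W x y * W x' y) := by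
  have hdiag : ∀ x, ∑ y, √(W x y * W x y) = 1 := fun x => by
    simp only [sqrt_mul_self (hnn x _)]
    exact hsum x
  calc ∑ y, (∑ x, √(W x y)) ^ 2 = ∑ x, ∑ x', ∑ y, √(W x y * W x' y) := by
        simp only [sq, sum_mul_sum, ← sqrt_mul (hnn _ _)]
        rw [sum_comm]
        exact sum_congr rfl fun x _ => sum_comm
    _ = ∑ x, (1 + ∑ x' ∈ univ.filter (· ≠ x), ∑ y, √(W x y * W x' y)) :=
        sum_congr rfl fun x _ => by
          rw [← hdiag x, filter_ne']
          exact (add_sum_erase _ (fun x' => ∑ y, √(W x y * W x' y)) (mem_univ x)).symm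
    _ = _ := by rw [sum_add_distrib, sum_const, card_univ, nsmul_one]

theorem card_mul_card_sub_one_mul_Zavg [DecidableEq X] (W : X → Y → ℝ)
    (hq : 2 ≤ Fintype.card X) :
    (Fintype.card X : ℝ) * (Fintype.card X - 1) * Zavg W =
      ∑ x, ∑ x' ∈ univ.filter (· ≠ x), ∑ y, √(W x y * W x' y) := by
  have hq' : (2 : ℝ) ≤ Fintype.card X := by exact_mod_cast hq
  have hne : (Fintype.card X : ℝ) * (Fintype.card X - 1) ≠ 0 := by nlinarith
  rw [Zavg, ← mul_assoc, mul_inv_cancel₀ hne, one_mul]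

theorem Zavg_nonneg [DecidableEq X] (W : X → Y → ℝ) : 0 ≤ Zavg W := by
  have hq : (0 : ℝ) ≤ Fintype.card X * (Fintype.card X - 1) := by
    rcases Nat.eq_zero_or_pos (Fintype.card X) with h | h
    · simp [h]
    · exact mul_nonneg (Nat.cast_nonneg _) (sub_nonneg.2 (by exact_mod_cast h))
  exact mul_nonneg (inv_nonneg.2 hq) <|
    sum_nonneg fun _ _ => sum_nonneg fun _ _ => sum_nonneg fun _ _ => sqrt_nonneg _

theorem sum_outputDist [Nonempty X] {W : X → Y → ℝ} (hsum : ∀ x, ∑ y, W x y = 1) :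
    ∑ y, outputDist W y = 1 := by
  simp only [outputDist, ← mul_sum]
  rw [sum_comm]
  simp [hsum]

theorem sum_jointDist [Nonempty X] {W : X → Y → ℝ} (hsum : ∀ x, ∑ y, W x y = 1) :
    ∑ z, jointDist W z = 1 := by
  simp [jointDist, Fintype.sum_prod_type, ← mul_sum, hsum]

theorem sum_jointDist_mul_log_div_prodDist [Nonempty X] (W : X → Y → ℝ) :
    ∑ z, jointDist W z * log (jointDist W z / prodDist W z) =
      ∑ x, ∑ y, (Fintype.card X : ℝ)⁻¹ * W x y *
        log (W x y / ((Fintype.card X : ℝ)⁻¹ * ∑ x', W x' y)) := by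
  rw [Fintype.sum_prod_type]
  refine sum_congr rfl fun x _ => sum_congr rfl fun y _ => ?_
  rw [jointDist, prodDist, mul_div_mul_left _ _ (by simp), outputDist]

theorem sum_sqrt_jointDist_mul_prodDist_le [DecidableEq X] {W : X → Y → ℝ}
    (hnn : ∀ x y, 0 ≤ W x y) (hsum : ∀ x, ∑ y, W x y = 1) (hq : 2 ≤ Fintype.card X) :
    ∑ z, √(jointDist W z * prodDist W z) ≤
      √((1 + (Fintype.card X - 1) * Zavg W) / Fintype.card X) := by
  have : Nonempty X := Fintype.card_pos_iff.1 (by omega)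
  set q : ℝ := (Fintype.card X : ℝ)
  have hfactor : ∑ z, √(jointDist W z * prodDist W z) =
      q⁻¹ * ∑ y, √(outputDist W y) * ∑ x, √(W x y) := by
    rw [Fintype.sum_prod_type, sum_comm, mul_sum]
    refine sum_congr rfl fun y _ => ?_
    rw [mul_sum, mul_sum]
    refine sum_congr rfl fun x _ => ?_
    rw [jointDist, prodDist, mul_mul_mul_comm, sqrt_mul (by positivity),
      sqrt_mul_self (by positivity), sqrt_mul (hnn x y)]
    ring
  have hCS : (∑ y, √(outputDist W y) * ∑ x, √(W x y)) ^ 2 ≤ q * (1 + (q - 1) * Zavg W) :=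
    calc _ ≤ (∑ y, √(outputDist W y) ^ 2) * ∑ y, (∑ x, √(W x y)) ^ 2 :=
          sum_mul_sq_le_sq_mul_sq _ _ _
      _ = q * (1 + (q - 1) * Zavg W) := by
          simp only [sq_sqrt (outputDist_nonneg hnn _), sum_outputDist hsum,
            sum_sq_sum_sqrt_eq_card_add hnn hsum, ← card_mul_card_sub_one_mul_Zavg W hq]
          ring
  rw [hfactor]
  refine le_sqrt_of_sq_le ?_
  rw [mul_pow]
  calc q⁻¹ ^ 2 * (∑ y, √(outputDist W y) * ∑ x, √(W x y)) ^ 2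
      ≤ q⁻¹ ^ 2 * (q * (1 + (q - 1) * Zavg W)) := by gcongr
    _ = _ := by field_simp

end Channel

/-- `I(W) ≥ log_q ( q / (1 + (q-1) Z(W)) )`: the symmetric capacity dominates the
symmetric cutoff rate. -/
theorem symCap_ge_cutoff {X Y : Type*} [Fintype X] [Fintype Y] [DecidableEq X]
    (W : X → Y → ℝ) (hq : 2 ≤ Fintype.card X)
    (hnn : ∀ x y, 0 ≤ W x y) (hsum : ∀ x, ∑ y, W x y = 1) :
    Real.log ((Fintype.card X : ℝ) /
        (1 + ((Fintype.card X : ℝ) - 1) * Zavg W)) / Real.log (Fintype.card X) ≤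
      symCapQ W := by
  have : Nonempty X := Fintype.card_pos_iff.1 (by omega)
  have hq1 : (1 : ℝ) < Fintype.card X := by exact_mod_cast hq
  have hB : 0 < (1 + (Fintype.card X - 1) * Zavg W) / Fintype.card X := by
    have := Zavg_nonneg W
    have : (0 : ℝ) ≤ Fintype.card X - 1 := by linarith
    positivity
  rw [symCapQ, div_le_div_iff_of_pos_right (log_pos hq1),
    ← sum_jointDist_mul_log_div_prodDist]
  calc log (Fintype.card X / (1 + (Fintype.card X - 1) * Zavg W))
      = -2 * log √((1 + (Fintype.card X - 1) * Zavg W) / Fintype.card X) := by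
        rw [log_sqrt hB.le, ← inv_div, log_inv]
        ring
    _ ≤ _ := neg_two_mul_log_le_sum_mul_log_div (jointDist_nonneg hnn) (prodDist_nonneg hnn)
        (sum_jointDist hsum) (jointDist_eq_zero_of_prodDist_eq_zero hnn) (sqrt_pos.2 hB)
        (sum_sqrt_jointDist_mul_prodDist_le hnn hsum hq)
end

section
/- For a q-ary input discrete channel W, the symmetric capacity (in nats, i.e. natural logarithm) satisfies I(W) ≤ log(q/2) + (log 2)·√(1 − Z(W)²). -/
open Finset

/-- Symmetric capacity of a channel with uniform input, in nats. -/
noncomputable def symCap {X Y : Type*} [Fintype X] [Fintype Y] (W : X → Y → ℝ) : ℝ :=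
  ∑ x, ∑ y, (Fintype.card X : ℝ)⁻¹ * W x y *
    Real.log (W x y / ((Fintype.card X : ℝ)⁻¹ * ∑ x', W x' y))

/-!
Write `I(W) = log q - H(X | Y)` for the uniform input. For an output `y` and inputs `x ≠ x'`, put
`a = W(y|x)`, `b = W(y|x')`. The binary entropy bound `h(p) ≥ 4 log 2 · p (1 - p)` at `p = a/(a+b)`
reads `4 log 2 · ab/(a+b) ≤ a log((a+b)/a) + b log((a+b)/b)`; enlarging `a + b` to the full column
sum and averaging over ordered pairs gives
`2 log 2 · ∑_{x ≠ x'} ∑_y ab/(a+b) ≤ q (q - 1) H(X | Y)`.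
Cauchy–Schwarz with `√(ab) = √(ab/(a+b)) · √(a+b)` and `∑_y (a + b) = 2` bounds
`(q (q - 1) Z(W))²` by `2 q (q - 1)` times the same sum. Hence `log 2 · Z(W)² ≤ H(X | Y)`, i.e.
`I(W) ≤ log (q/2) + log 2 · (1 - Z(W)²)`, and `1 - Z² ≤ √(1 - Z²)`.
-/

open Real

lemma min_le_of_hasDerivAt_of_neg_persists {f f' : ℝ → ℝ} {a b c : ℝ}
    (hf : ContinuousOn f (Set.Icc a b)) (hf' : ∀ x ∈ Set.Ioo a b, HasDerivAt f (f' x) x)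
    (hneg : ∀ x y, a < x → x < y → y < b → f' x < 0 → f' y < 0) (hc : c ∈ Set.Icc a b) :
    min (f a) (f b) ≤ f c := by
  rcases hc.1.eq_or_lt with rfl | hac
  · exact min_le_left _ _
  rcases hc.2.eq_or_lt with rfl | hcb
  · exact min_le_right _ _
  by_contra! hlt
  obtain ⟨ξ, hξ, hslope_left⟩ := exists_hasDerivAt_eq_slope f f' hac
    (hf.mono (Set.Icc_subset_Icc_right hcb.le)) fun x hx => hf' x ⟨hx.1, hx.2.trans hcb⟩
  obtain ⟨η, hη, hslope_right⟩ := exists_hasDerivAt_eq_slope f f' hcb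
    (hf.mono (Set.Icc_subset_Icc_left hac.le)) fun x hx => hf' x ⟨hac.trans hx.1, hx.2⟩
  have hξ_neg : f' ξ < 0 := by
    rw [hslope_left]
    exact div_neg_of_neg_of_pos (by linarith [min_le_left (f a) (f b)]) (by linarith)
  have hη_pos : 0 < f' η := by
    rw [hslope_right]
    exact div_pos (by linarith [min_le_right (f a) (f b)]) (by linarith)
  exact (hneg ξ η hξ.1 (hξ.2.trans hη.1) hη.2 hξ_neg).not_gt hη_pos

-- The function is the derivative of `binEntropy p - 4 * log 2 * (p * (1 - p))`.
lemma convexOn_log_one_sub_sub_log :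
    ConvexOn ℝ (Set.Ioc 0 2⁻¹) (fun p => log (1 - p) - log p - 4 * log 2 * (1 - 2 * p)) := by
  have hderiv : ∀ p ∈ Set.Ioo (0 : ℝ) 2⁻¹, HasDerivAt
      (fun p => log (1 - p) - log p - 4 * log 2 * (1 - 2 * p)) (8 * log 2 - (p * (1 - p))⁻¹) p := by
    intro p hp
    have h0 : p ≠ 0 := hp.1.ne'
    have h1 : 1 - p ≠ 0 := (by linarith [hp.2] : 0 < 1 - p).ne'
    have hlog_one_sub := ((hasDerivAt_id p).const_sub 1).log h1
    have hlin := ((hasDerivAt_id p).const_mul 2).const_sub 1 |>.const_mul (4 * log 2)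
    refine ((hlog_one_sub.sub (hasDerivAt_log h0)).sub hlin).congr_deriv ?_
    simp only [id]
    field_simp
    ring
  refine MonotoneOn.convexOn_of_deriv (convex_Ioc _ _) ?_ ?_ ?_
  · refine ContinuousOn.sub (ContinuousOn.sub ?_ ?_) (by fun_prop)
    · exact (continuousOn_const.sub continuousOn_id).log fun p hp =>
        (by linarith [hp.2] : (0 : ℝ) < 1 - p).ne'
    · exact continuousOn_log.mono fun p hp => hp.1.ne'
  · rw [interior_Ioc]
    exact fun p hp => (hderiv p hp).differentiableAt.differentiableWithinAt
  · rw [interior_Ioc]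
    intro p hp p' hp' hpp'
    rw [(hderiv p hp).deriv, (hderiv p' hp').deriv]
    have : p * (1 - p) ≤ p' * (1 - p') := by nlinarith [hp.2, hp'.2]
    have : (p' * (1 - p'))⁻¹ ≤ (p * (1 - p))⁻¹ :=
      inv_anti₀ (by nlinarith [hp.1, hp.2]) this
    linarith

theorem four_mul_log_two_mul_le_binEntropy {p : ℝ} (h0 : 0 ≤ p) (h1 : p ≤ 1) :
    4 * log 2 * (p * (1 - p)) ≤ binEntropy p := by
  wlog hp : p ≤ 2⁻¹ generalizing p
  · simpa [mul_comm] using this (p := 1 - p) (by linarith) (by linarith) (by linarith)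
  -- `g` below vanishes at `0` and `1/2`; its derivative `d` is convex with `d (1/2) = 0`, so it
  -- changes sign at most once, from `+` to `-`.
  set d := fun p => log (1 - p) - log p - 4 * log 2 * (1 - 2 * p)
  have hneg : ∀ x y, 0 < x → x < y → y < 2⁻¹ → d x < 0 → d y < 0 := by
    intro x y hx hxy hy hdx
    have hslope : (d y - d x) / (y - x) ≤ (d 2⁻¹ - d y) / (2⁻¹ - y) :=
      convexOn_log_one_sub_sub_log.slope_mono_adjacent ⟨hx, by linarith⟩ ⟨by norm_num, le_rfl⟩
        hxy hy
    have hd_half : d 2⁻¹ = 0 := by norm_num [d]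
    by_contra! hdy
    rw [hd_half] at hslope
    have : 0 < (d y - d x) / (y - x) := div_pos (by linarith) (by linarith)
    have : (0 - d y) / (2⁻¹ - y) ≤ 0 :=
      div_nonpos_of_nonpos_of_nonneg (by linarith) (by linarith)
    linarith
  set g := fun p => binEntropy p - 4 * log 2 * (p * (1 - p))
  have hg : ∀ x ∈ Set.Ioo (0 : ℝ) 2⁻¹, HasDerivAt g (d x) x := fun x hx =>
    ((hasDerivAt_binEntropy hx.1.ne' (by linarith [hx.2])).sub
      (((hasDerivAt_id x).mul ((hasDerivAt_id x).const_sub 1)).const_mul (4 * log 2))).congr_deriv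
      (by simp only [d, id]; ring)
  have hg_ends : min (g 0) (g 2⁻¹) = 0 := by
    simp only [g, binEntropy_zero, binEntropy_two_inv]
    ring_nf
    exact min_self 0
  have := min_le_of_hasDerivAt_of_neg_persists (by fun_prop) hg hneg ⟨h0, hp⟩
  rw [hg_ends] at this
  exact sub_nonneg.1 this

theorem four_mul_log_two_mul_div_le {a b : ℝ} (ha : 0 ≤ a) (hb : 0 ≤ b) :
    4 * log 2 * (a * b / (a + b)) ≤ a * log ((a + b) / a) + b * log ((a + b) / b) := by
  rcases (add_nonneg ha hb).eq_or_lt with hab | hab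
  · obtain rfl : a = 0 := by linarith
    obtain rfl : b = 0 := by linarith
    simp
  have key := four_mul_log_two_mul_le_binEntropy (div_nonneg ha hab.le)
    (div_le_one_of_le₀ (le_add_of_nonneg_right hb) hab.le)
  rw [binEntropy, one_sub_div hab.ne', add_sub_cancel_left, inv_div, inv_div] at key
  calc 4 * log 2 * (a * b / (a + b))
      = (a + b) * (4 * log 2 * (a / (a + b) * (b / (a + b)))) := by field_simp
    _ ≤ (a + b) * (a / (a + b) * log ((a + b) / a) + b / (a + b) * log ((a + b) / b)) := by
        gcongr
    _ = a * log ((a + b) / a) + b * log ((a + b) / b) := by field_simp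

section OffDiag

variable {X : Type*} [Fintype X]

theorem sum_offDiag_eq_sum_sum_filter_ne [DecidableEq X] {M : Type*} [AddCommMonoid M]
    (f : X → X → M) :
    ∑ p ∈ univ.offDiag, f p.1 p.2 = ∑ x, ∑ x' ∈ univ.filter (· ≠ x), f x x' :=
  sum_finset_product _ _ _ fun p => by simp [ne_comm]

theorem sum_offDiag_swap {M : Type*} [AddCommMonoid M] (f : X → X → M) :
    ∑ p ∈ univ.offDiag, f p.2 p.1 = ∑ p ∈ univ.offDiag, f p.1 p.2 :=
  sum_nbij' Prod.swap Prod.swap (by simp [ne_comm]) (by simp [ne_comm]) (by simp) (by simp)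
    (by simp)

theorem sum_offDiag_fst [DecidableEq X] {R : Type*} [CommRing R] (f : X → R) :
    ∑ p ∈ univ.offDiag, f p.1 = ((Fintype.card X : R) - 1) * ∑ x, f x := by
  rw [sum_offDiag_eq_sum_sum_filter_ne (fun x _ => f x), mul_sum]
  refine sum_congr rfl fun x _ => ?_
  rw [sum_const, filter_ne', card_erase_of_mem (mem_univ x), card_univ, nsmul_eq_mul,
    Nat.cast_pred (Fintype.card_pos_iff.2 ⟨x⟩)]

theorem two_mul_log_two_mul_sum_offDiag_le [DecidableEq X] (w : X → ℝ) (hw : ∀ x, 0 ≤ w x) :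
    2 * log 2 * ∑ p ∈ univ.offDiag, w p.1 * w p.2 / (w p.1 + w p.2)
      ≤ ((Fintype.card X : ℝ) - 1) * ∑ x, w x * log ((∑ x', w x') / w x) := by
  have hsymm : ∑ p ∈ univ.offDiag, w p.2 * log ((w p.1 + w p.2) / w p.2)
      = ∑ p ∈ univ.offDiag, w p.1 * log ((w p.1 + w p.2) / w p.1) := by
    simpa only [add_comm] using sum_offDiag_swap fun x x' => w x * log ((w x + w x') / w x)
  have hmono : ∀ p ∈ univ.offDiag, w p.1 * log ((w p.1 + w p.2) / w p.1)
      ≤ w p.1 * log ((∑ x, w x) / w p.1) := by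
    intro p hp
    rcases (hw p.1).eq_or_lt with h | h
    · simp [← h]
    gcongr
    · exact div_pos (add_pos_of_pos_of_nonneg h (hw _)) h
    · exact add_le_sum (fun i _ => hw i) (mem_univ _) (mem_univ _) (mem_offDiag.1 hp).2.2
  calc 2 * log 2 * ∑ p ∈ univ.offDiag, w p.1 * w p.2 / (w p.1 + w p.2)
      = (∑ p ∈ univ.offDiag, 4 * log 2 * (w p.1 * w p.2 / (w p.1 + w p.2))) / 2 := by
        rw [← mul_sum]; ring
    _ ≤ (∑ p ∈ univ.offDiag, (w p.1 * log ((w p.1 + w p.2) / w p.1)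
          + w p.2 * log ((w p.1 + w p.2) / w p.2))) / 2 := by
        gcongr with p
        exact four_mul_log_two_mul_div_le (hw _) (hw _)
    _ = ∑ p ∈ univ.offDiag, w p.1 * log ((w p.1 + w p.2) / w p.1) := by
        rw [sum_add_distrib, hsymm]; ring
    _ ≤ ∑ p ∈ univ.offDiag, w p.1 * log ((∑ x, w x) / w p.1) := sum_le_sum hmono
    _ = _ := sum_offDiag_fst fun x => w x * log ((∑ x', w x') / w x)

end OffDiag

section Channel

variable {X Y : Type*} [Fintype X] [Fintype Y]

-- `H(X | Y)` for the uniform input: the posterior of `x` given `y` is `W x y / ∑ x', W x' y`.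
noncomputable def symCondEntropy (W : X → Y → ℝ) : ℝ :=
  (Fintype.card X : ℝ)⁻¹ * ∑ y, ∑ x, W x y * log ((∑ x', W x' y) / W x y)

theorem symCap_eq_log_card_sub_symCondEntropy [Nonempty X] (W : X → Y → ℝ)
    (hnn : ∀ x y, 0 ≤ W x y) (hsum : ∀ x, ∑ y, W x y = 1) :
    symCap W = log (Fintype.card X) - symCondEntropy W := by
  rw [symCap, symCondEntropy]
  set q : ℝ := (Fintype.card X : ℝ) with hq_def
  have hq : q ≠ 0 := Nat.cast_ne_zero.2 Fintype.card_ne_zero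
  have hterm : ∀ x y, q⁻¹ * W x y * log (W x y / (q⁻¹ * ∑ x', W x' y))
      = q⁻¹ * log q * W x y - q⁻¹ * (W x y * log ((∑ x', W x' y) / W x y)) := by
    intro x y
    rcases (hnn x y).eq_or_lt with h | h
    · simp [← h]
    have hS : 0 < ∑ x', W x' y :=
      h.trans_le (single_le_sum (fun x' _ => hnn x' y) (mem_univ x))
    rw [show W x y / (q⁻¹ * ∑ x', W x' y) = q * ((∑ x', W x' y) / W x y)⁻¹ by field_simp,
      log_mul hq (by positivity), log_inv]
    ring
  simp only [hterm, sum_sub_distrib, ← mul_sum, hsum, mul_one, sum_const, card_univ, nsmul_eq_mul,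
    ← hq_def]
  rw [sum_comm, inv_mul_cancel_left₀ hq]

variable [DecidableEq X]

theorem Zavg_eq_sum_offDiag (W : X → Y → ℝ) :
    Zavg W = ((Fintype.card X : ℝ) * (Fintype.card X - 1))⁻¹ *
      ∑ p ∈ univ.offDiag, ∑ y, √(W p.1 y * W p.2 y) := by
  rw [Zavg, sum_offDiag_eq_sum_sum_filter_ne fun x x' => ∑ y, √(W x y * W x' y)]

theorem sq_sum_offDiag_sqrt_le (W : X → Y → ℝ) (hnn : ∀ x y, 0 ≤ W x y)
    (hsum : ∀ x, ∑ y, W x y = 1) :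
    (∑ p ∈ univ.offDiag, ∑ y, √(W p.1 y * W p.2 y)) ^ 2 ≤
      2 * ((Fintype.card X : ℝ) * (Fintype.card X - 1)) *
        ∑ p ∈ univ.offDiag, ∑ y, W p.1 y * W p.2 y / (W p.1 y + W p.2 y) := by
  have hsplit : ∀ a b : ℝ, 0 ≤ a → 0 ≤ b → √(a * b) = √(a * b / (a + b)) * √(a + b) := by
    intro a b ha hb
    rw [← sqrt_mul (by positivity)]
    rcases (add_nonneg ha hb).eq_or_lt with h | h
    · obtain rfl : a = 0 := by linarith
      simp
    · rw [div_mul_cancel₀ _ h.ne']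
  have hmass : ∑ p ∈ univ.offDiag, ∑ y, (W p.1 y + W p.2 y)
      = 2 * ((Fintype.card X : ℝ) * (Fintype.card X - 1)) := by
    simp only [sum_add_distrib, hsum, sum_offDiag_fst fun _ => (1 : ℝ)]
    simp only [sum_const, card_univ, nsmul_eq_mul, mul_one]
    ring
  have hf : ∀ p : (X × X) × Y, 0 ≤ W p.1.1 p.2 * W p.1.2 p.2 / (W p.1.1 p.2 + W p.1.2 p.2) :=
    fun p => div_nonneg (mul_nonneg (hnn _ _) (hnn _ _)) (add_nonneg (hnn _ _) (hnn _ _))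
  have hg : ∀ p : (X × X) × Y, 0 ≤ W p.1.1 p.2 + W p.1.2 p.2 :=
    fun p => add_nonneg (hnn _ _) (hnn _ _)
  have hCS := Real.sum_sqrt_mul_sqrt_le (univ.offDiag ×ˢ (univ : Finset Y)) hf hg
  simp only [sum_product, ← hsplit _ _ (hnn _ _) (hnn _ _)] at hCS
  have hG : 0 ≤ ∑ p ∈ univ.offDiag, ∑ y, W p.1 y * W p.2 y / (W p.1 y + W p.2 y) :=
    sum_nonneg fun p _ => sum_nonneg fun y _ => hf (p, y)
  have hT : 0 ≤ ∑ p ∈ univ.offDiag, ∑ y, (W p.1 y + W p.2 y) :=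
    sum_nonneg fun p _ => sum_nonneg fun y _ => hg (p, y)
  calc _ ≤ _ :=
        pow_le_pow_left₀ (sum_nonneg fun _ _ => sum_nonneg fun _ _ => sqrt_nonneg _) hCS 2
    _ = _ := by rw [mul_pow, sq_sqrt hG, sq_sqrt hT, hmass, mul_comm]

theorem log_two_mul_Zavg_sq_le_symCondEntropy (W : X → Y → ℝ) (hq : 2 ≤ Fintype.card X)
    (hnn : ∀ x y, 0 ≤ W x y) (hsum : ∀ x, ∑ y, W x y = 1) :
    log 2 * Zavg W ^ 2 ≤ symCondEntropy W := by
  have hCS := sq_sum_offDiag_sqrt_le W hnn hsum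
  have hcolumns : 2 * log 2 * ∑ p ∈ univ.offDiag, ∑ y, W p.1 y * W p.2 y / (W p.1 y + W p.2 y)
      ≤ ((Fintype.card X : ℝ) - 1) * ∑ y, ∑ x, W x y * log ((∑ x', W x' y) / W x y) := by
    rw [sum_comm, mul_sum, mul_sum]
    exact sum_le_sum fun y _ => two_mul_log_two_mul_sum_offDiag_le (W · y) (hnn · y)
  have hq : (2 : ℝ) ≤ Fintype.card X := by exact_mod_cast hq
  rw [Zavg_eq_sum_offDiag, symCondEntropy]
  set q : ℝ := (Fintype.card X : ℝ)
  set R := ∑ p ∈ univ.offDiag, ∑ y, √(W p.1 y * W p.2 y)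
  set G := ∑ p ∈ univ.offDiag, ∑ y, W p.1 y * W p.2 y / (W p.1 y + W p.2 y)
  set H := ∑ y, ∑ x, W x y * log ((∑ x', W x' y) / W x y)
  have hq1 : 0 < q - 1 := by linarith
  have hN : 0 < q * (q - 1) := by positivity
  calc log 2 * ((q * (q - 1))⁻¹ * R) ^ 2 = log 2 * R ^ 2 / (q * (q - 1)) ^ 2 := by
        field_simp
    _ ≤ log 2 * (2 * (q * (q - 1)) * G) / (q * (q - 1)) ^ 2 := by gcongr
    _ = 2 * log 2 * G / (q * (q - 1)) := by field_simp
    _ ≤ (q - 1) * H / (q * (q - 1)) := by gcongr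
    _ = q⁻¹ * H := by field_simp

end Channel

/-- `I(W) ≤ log(q/2) + (log 2) √(1 - Z(W)²)`. -/
theorem symCap_le_log_half_q_add {X Y : Type*} [Fintype X] [Fintype Y] [DecidableEq X]
    (W : X → Y → ℝ) (hq : 2 ≤ Fintype.card X)
    (hnn : ∀ x y, 0 ≤ W x y) (hsum : ∀ x, ∑ y, W x y = 1) :
    symCap W ≤ Real.log ((Fintype.card X : ℝ) / 2) +
      Real.log 2 * Real.sqrt (1 - Zavg W ^ 2) := by
  have : Nonempty X := Fintype.card_pos_iff.1 (by omega)
  calc symCap W = log (Fintype.card X) - symCondEntropy W :=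
        symCap_eq_log_card_sub_symCondEntropy W hnn hsum
    _ ≤ log (Fintype.card X) - log 2 * Zavg W ^ 2 := by
        linarith [log_two_mul_Zavg_sq_le_symCondEntropy W hq hnn hsum]
    _ = log ((Fintype.card X : ℝ) / 2) + log 2 * (1 - Zavg W ^ 2) := by
        rw [log_div (by positivity) two_ne_zero]; ring
    _ ≤ log ((Fintype.card X : ℝ) / 2) + log 2 * √(1 - Zavg W ^ 2) := by
        gcongr
        exact le_sqrt_self_iff.2 (sub_le_self _ (sq_nonneg _))
end

section
/- For a q-ary input discrete channel W, the symmetric capacity in nats satisfies I(W) ≤ 2(q−1)·√(1 − Z(W)²). -/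
open Finset

/-- Cauchy–Schwarz: ∑ √(a i) * g i ≤ √(∑ a) * √(∑ g²). -/
lemma sum_sqrt_mul_le {ι : Type*} (s : Finset ι) (a g : ι → ℝ)
    (ha : ∀ i ∈ s, 0 ≤ a i) (hg : ∀ i ∈ s, 0 ≤ g i) :
    ∑ i ∈ s, Real.sqrt (a i) * g i ≤
      Real.sqrt (∑ i ∈ s, a i) * Real.sqrt (∑ i ∈ s, g i ^ 2) := by
  have h := Finset.sum_mul_sq_le_sq_mul_sq s (fun i => Real.sqrt (a i)) g
  have hnn : 0 ≤ ∑ i ∈ s, Real.sqrt (a i) * g i :=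
    Finset.sum_nonneg fun i hi => mul_nonneg (Real.sqrt_nonneg _) (hg i hi)
  have heq : ∑ i ∈ s, Real.sqrt (a i) ^ 2 = ∑ i ∈ s, a i :=
    Finset.sum_congr rfl fun i hi => Real.sq_sqrt (ha i hi)
  rw [heq] at h
  calc ∑ i ∈ s, Real.sqrt (a i) * g i
      = Real.sqrt ((∑ i ∈ s, Real.sqrt (a i) * g i) ^ 2) := (Real.sqrt_sq hnn).symm
    _ ≤ Real.sqrt ((∑ i ∈ s, a i) * ∑ i ∈ s, g i ^ 2) := Real.sqrt_le_sqrt h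
    _ = _ := Real.sqrt_mul (Finset.sum_nonneg ha) _

/-- ∑ √(f i) ≤ √card * √(∑ f). -/
lemma sqrt_sum_le' {ι : Type*} (s : Finset ι) (f : ι → ℝ) (hf : ∀ i ∈ s, 0 ≤ f i) :
    ∑ i ∈ s, Real.sqrt (f i) ≤ Real.sqrt (s.card : ℝ) * Real.sqrt (∑ i ∈ s, f i) := by
  have h := sum_sqrt_mul_le s f (fun _ => 1) hf (fun _ _ => zero_le_one)
  simpa [mul_comm] using h

/-- log-term bound: a log(a/(q⁻¹ S)) ≤ q a²/S - a. -/
lemma logterm_le {a S q : ℝ} (ha : 0 ≤ a) (haS : a ≤ S) (hq : 0 < q) :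
    a * Real.log (a / (q⁻¹ * S)) ≤ q * a ^ 2 / S - a := by
  rcases eq_or_lt_of_le ha with h0 | h0
  · simp [← h0]
  · have hS : 0 < S := lt_of_lt_of_le h0 haS
    have ht : 0 < a / (q⁻¹ * S) := by positivity
    have := Real.log_le_sub_one_of_pos ht
    have h2 : a * Real.log (a / (q⁻¹ * S)) ≤ a * (a / (q⁻¹ * S) - 1) :=
      mul_le_mul_of_nonneg_left this ha
    refine h2.trans_eq ?_
    field_simp

/-- pointwise chi-square term bound. -/
lemma chi_term_le {a b S : ℝ} (ha : 0 ≤ a) (hb : 0 ≤ b) (hS : a + b ≤ S) :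
    a * (a - b) / S ≤ Real.sqrt 2 * (Real.sqrt a * |Real.sqrt a - Real.sqrt b|) := by
  have hrhs : 0 ≤ Real.sqrt 2 * (Real.sqrt a * |Real.sqrt a - Real.sqrt b|) := by positivity
  rcases eq_or_lt_of_le ha with h0 | h0
  · simp [← h0]
  · have hS0 : 0 < S := lt_of_lt_of_le (by linarith) hS
    rcases le_or_gt a b with hab | hab
    · exact le_trans (div_nonpos_of_nonpos_of_nonneg (mul_nonpos_of_nonneg_of_nonpos ha (by linarith)) hS0.le) hrhs
    · -- b < a
      set u := Real.sqrt a with hu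
      set v := Real.sqrt b with hv
      have hu2 : u ^ 2 = a := Real.sq_sqrt ha
      have hv2 : v ^ 2 = b := Real.sq_sqrt hb
      have hu0 : 0 < u := Real.sqrt_pos.mpr h0
      have hv0 : 0 ≤ v := Real.sqrt_nonneg _
      have hvu : v < u := by
        rw [hu, hv]; exact Real.sqrt_lt_sqrt hb hab
      have habs : |u - v| = u - v := abs_of_pos (by linarith)
      rw [habs]
      have hs : Real.sqrt 2 ^ 2 = 2 := Real.sq_sqrt (by norm_num)
      have hs43 : (4:ℝ)/3 ≤ Real.sqrt 2 := by
        nlinarith [Real.sqrt_nonneg 2]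
      set s := Real.sqrt 2 with hsdef
      have key : u * (u + v) ≤ s * (u ^ 2 + v ^ 2) := by
        nlinarith [sq_nonneg (u - s * v)]
      have step1 : a * (a - b) / S ≤ a * (a - b) / (a + b) := by
        apply div_le_div_of_nonneg_left (by nlinarith) (by linarith) hS
      refine step1.trans ?_
      rw [div_le_iff₀ (by linarith)]
      calc a * (a - b) = (u * (u + v)) * (u * (u - v)) := by
            rw [← hu2, ← hv2]; ring
        _ ≤ (s * (u ^ 2 + v ^ 2)) * (u * (u - v)) := by
            apply mul_le_mul_of_nonneg_right key
            exact mul_nonneg hu0.le (by linarith)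
        _ = s * (u * (u - v)) * (a + b) := by rw [← hu2, ← hv2]; ring


/-- `I(W) ≤ 2(q-1) √(1 - Z(W)²)` (in nats). -/
theorem symCap_le_two_q_sub_one_sqrt {X Y : Type*} [Fintype X] [Fintype Y] [DecidableEq X]
    (W : X → Y → ℝ) (hq : 2 ≤ Fintype.card X)
    (hnn : ∀ x y, 0 ≤ W x y) (hsum : ∀ x, ∑ y, W x y = 1) :
    symCap W ≤ 2 * ((Fintype.card X : ℝ) - 1) * Real.sqrt (1 - Zavg W ^ 2) := by
  classical
  set q : ℝ := (Fintype.card X : ℝ) with hqdef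
  have hq2 : (2:ℝ) ≤ q := by rw [hqdef]; exact_mod_cast hq
  have hq0 : 0 < q := by linarith
  set S : Y → ℝ := fun y => ∑ x', W x' y with hSdef
  have hS0 : ∀ y, 0 ≤ S y := fun y => Finset.sum_nonneg fun x _ => hnn x y
  have haS : ∀ x y, W x y ≤ S y := fun x y =>
    Finset.single_le_sum (fun i _ => hnn i y) (Finset.mem_univ x)
  set B : X → X → ℝ := fun x x' => ∑ y, Real.sqrt (W x y * W x' y) with hBdef
  have hB0 : ∀ x x', 0 ≤ B x x' := fun x x' =>
    Finset.sum_nonneg fun y _ => Real.sqrt_nonneg _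
  have hB1 : ∀ x x', B x x' ≤ 1 := by
    intro x x'
    have h := sum_sqrt_mul_le univ (fun y => W x y) (fun y => Real.sqrt (W x' y))
      (fun y _ => hnn x y) (fun y _ => Real.sqrt_nonneg _)
    simp only [Real.sq_sqrt (hnn x' _)] at h
    calc B x x' = ∑ y, Real.sqrt (W x y) * Real.sqrt (W x' y) :=
          Finset.sum_congr rfl fun y _ => Real.sqrt_mul (hnn x y) _
      _ ≤ Real.sqrt (∑ y, W x y) * Real.sqrt (∑ y, W x' y) := h
      _ = 1 := by rw [hsum x, hsum x', Real.sqrt_one, mul_one]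
  -- Step 2 : per-pair bound
  have key2 : ∀ x x', x' ≠ x →
      ∑ y, W x y * (W x y - W x' y) / S y ≤ 2 * Real.sqrt (1 - B x x') := by
    intro x x' hne
    have hpair : ∀ y, W x y + W x' y ≤ S y := by
      intro y
      have : ∑ i ∈ ({x, x'} : Finset X), W i y ≤ S y := by
        apply Finset.sum_le_sum_of_subset_of_nonneg (Finset.subset_univ _)
        intro i _ _; exact hnn i y
      rwa [Finset.sum_pair (Ne.symm hne)] at this
    calc ∑ y, W x y * (W x y - W x' y) / S y
        ≤ ∑ y, Real.sqrt 2 * (Real.sqrt (W x y) * |Real.sqrt (W x y) - Real.sqrt (W x' y)|) :=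
          Finset.sum_le_sum fun y _ => chi_term_le (hnn x y) (hnn x' y) (hpair y)
      _ = Real.sqrt 2 * ∑ y, Real.sqrt (W x y) * |Real.sqrt (W x y) - Real.sqrt (W x' y)| :=
          (Finset.mul_sum _ _ _).symm
      _ ≤ Real.sqrt 2 * (Real.sqrt (∑ y, W x y) *
            Real.sqrt (∑ y, |Real.sqrt (W x y) - Real.sqrt (W x' y)| ^ 2)) := by
          apply mul_le_mul_of_nonneg_left _ (Real.sqrt_nonneg 2)
          exact sum_sqrt_mul_le univ (fun y => W x y) _ (fun y _ => hnn x y)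
            (fun y _ => abs_nonneg _)
      _ = 2 * Real.sqrt (1 - B x x') := by
          have hexp : ∑ y, |Real.sqrt (W x y) - Real.sqrt (W x' y)| ^ 2 = 2 - 2 * B x x' := by
            have : ∀ y, |Real.sqrt (W x y) - Real.sqrt (W x' y)| ^ 2
                = W x y + W x' y - 2 * Real.sqrt (W x y * W x' y) := by
              intro y
              rw [sq_abs, sub_sq, Real.sq_sqrt (hnn x y), Real.sq_sqrt (hnn x' y),
                Real.sqrt_mul (hnn x y)]
              ring
            rw [Finset.sum_congr rfl fun y _ => this y]
            rw [Finset.sum_sub_distrib, Finset.sum_add_distrib, hsum x, hsum x',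
              ← Finset.mul_sum]
            simp only [hBdef]
            ring
          rw [hexp, hsum x, Real.sqrt_one, one_mul, ← Real.sqrt_mul (by norm_num : (0:ℝ) ≤ 2)]
          rw [show (2:ℝ) * (2 - 2 * B x x') = 4 * (1 - B x x') by ring,
            Real.sqrt_mul (by norm_num : (0:ℝ) ≤ 4),
            show Real.sqrt 4 = 2 by
              rw [show (4:ℝ) = 2 ^ 2 by norm_num, Real.sqrt_sq (by norm_num)]]
  -- Step 3 : pointwise identity
  have key3 : ∀ x y, q * W x y ^ 2 / S y - W x y
      = ∑ x' ∈ univ.filter (· ≠ x), W x y * (W x y - W x' y) / S y := by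
    intro x y
    rcases eq_or_lt_of_le (hnn x y) with h0 | h0
    · simp [← h0]
    · have hSy : 0 < S y := lt_of_lt_of_le h0 (haS x y)
      rw [Finset.filter_ne', Finset.sum_erase_eq_sub (Finset.mem_univ x)]
      rw [show W x y * (W x y - W x y) / S y = 0 by rw [sub_self, mul_zero, zero_div], sub_zero]
      rw [show ∀ (f : X → ℝ), ∑ x' : X, W x y * (W x y - f x') / S y
          = (W x y * (q * W x y - ∑ x', f x')) / S y from ?_]
      · field_simp
        ring
      · intro f
        rw [← Finset.sum_div, ← Finset.mul_sum, Finset.sum_sub_distrib,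
          Finset.sum_const, Finset.card_univ, nsmul_eq_mul, hqdef]
  -- Step 1: combine
  have step1 : symCap W ≤ q⁻¹ * ∑ x, ∑ x' ∈ univ.filter (· ≠ x), 2 * Real.sqrt (1 - B x x') := by
    have h1 : symCap W ≤ ∑ x, ∑ y, q⁻¹ * (q * W x y ^ 2 / S y - W x y) := by
      unfold symCap
      rw [← hqdef]
      apply Finset.sum_le_sum; intro x _
      apply Finset.sum_le_sum; intro y _
      rw [mul_assoc]
      exact mul_le_mul_of_nonneg_left (logterm_le (hnn x y) (haS x y) hq0) (by positivity)
    refine h1.trans ?_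
    rw [Finset.mul_sum]
    apply Finset.sum_le_sum; intro x _
    rw [← Finset.mul_sum]
    apply mul_le_mul_of_nonneg_left _ (by positivity)
    calc ∑ y, (q * W x y ^ 2 / S y - W x y)
        = ∑ y, ∑ x' ∈ univ.filter (· ≠ x), W x y * (W x y - W x' y) / S y :=
          Finset.sum_congr rfl fun y _ => key3 x y
      _ = ∑ x' ∈ univ.filter (· ≠ x), ∑ y, W x y * (W x y - W x' y) / S y := Finset.sum_comm
      _ ≤ ∑ x' ∈ univ.filter (· ≠ x), 2 * Real.sqrt (1 - B x x') :=
          Finset.sum_le_sum fun x' hx' => key2 x x' (Finset.mem_filter.mp hx').2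
  -- cardinalities
  have hcard : ∀ x : X, (((univ : Finset X).filter (· ≠ x)).card : ℝ) = q - 1 := by
    intro x
    rw [Finset.filter_ne', Finset.card_erase_of_mem (Finset.mem_univ x), Finset.card_univ,
      Nat.cast_sub (by omega : 1 ≤ Fintype.card X), Nat.cast_one, ← hqdef]
  -- Z identity
  have hqq0 : (0:ℝ) < q * (q - 1) := by nlinarith
  have hZ : ∑ x : X, ∑ x' ∈ univ.filter (· ≠ x), B x x' = q * (q - 1) * Zavg W := by
    unfold Zavg
    rw [← hqdef, ← mul_assoc, mul_inv_cancel₀ hqq0.ne', one_mul]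
  have hZ0 : 0 ≤ Zavg W := by
    unfold Zavg
    rw [← hqdef]
    exact mul_nonneg (inv_nonneg.mpr hqq0.le) (Finset.sum_nonneg fun x _ =>
      Finset.sum_nonneg fun x' _ => Finset.sum_nonneg fun y _ => Real.sqrt_nonneg _)
  have hZ1 : Zavg W ≤ 1 := by
    have hle : ∑ x : X, ∑ x' ∈ univ.filter (· ≠ x), B x x' ≤ q * (q - 1) := by
      calc ∑ x : X, ∑ x' ∈ univ.filter (· ≠ x), B x x'
          ≤ ∑ x : X, ∑ x' ∈ univ.filter (· ≠ x), (1:ℝ) :=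
            Finset.sum_le_sum fun x _ => Finset.sum_le_sum fun x' _ => hB1 x x'
        _ = q * (q - 1) := by
            simp only [Finset.sum_const, nsmul_eq_mul, mul_one]
            rw [Finset.sum_congr rfl fun x _ => hcard x, Finset.sum_const,
              Finset.card_univ, nsmul_eq_mul, ← hqdef]
    rw [hZ] at hle
    nlinarith
  -- Step 5: Cauchy-Schwarz over pairs
  set R : X → ℝ := fun x => ∑ x' ∈ univ.filter (· ≠ x), (1 - B x x') with hRdef
  have hR0 : ∀ x, 0 ≤ R x := fun x => Finset.sum_nonneg fun x' _ => sub_nonneg.mpr (hB1 x x')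
  have inner : ∀ x : X, ∑ x' ∈ univ.filter (· ≠ x), Real.sqrt (1 - B x x')
      ≤ Real.sqrt ((q - 1) * R x) := by
    intro x
    have h := sqrt_sum_le' (univ.filter (· ≠ x)) (fun x' => 1 - B x x')
      (fun x' _ => sub_nonneg.mpr (hB1 x x'))
    rw [hcard x] at h
    exact h.trans_eq (Real.sqrt_mul (by linarith) _).symm
  have outer : ∑ x : X, Real.sqrt ((q - 1) * R x)
      ≤ Real.sqrt q * Real.sqrt ((q - 1) * ∑ x, R x) := by
    have h := sqrt_sum_le' (univ : Finset X) (fun x => (q - 1) * R x)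
      (fun x _ => mul_nonneg (by linarith) (hR0 x))
    rw [Finset.card_univ, ← hqdef, ← Finset.mul_sum] at h
    exact h
  have hsumR : ∑ x : X, R x = q * (q - 1) * (1 - Zavg W) := by
    have hRx : ∀ x : X, R x = (q - 1) - ∑ x' ∈ univ.filter (· ≠ x), B x x' := by
      intro x
      show ∑ x' ∈ _, (1 - B x x') = _
      rw [Finset.sum_sub_distrib, Finset.sum_const, nsmul_eq_mul, mul_one, hcard x]
    rw [Finset.sum_congr rfl fun x _ => hRx x, Finset.sum_sub_distrib,
      Finset.sum_const, Finset.card_univ, nsmul_eq_mul, ← hqdef, hZ]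
    ring
  have halg : Real.sqrt q * Real.sqrt ((q - 1) * (q * (q - 1) * (1 - Zavg W)))
      = q * (q - 1) * Real.sqrt (1 - Zavg W) := by
    rw [← Real.sqrt_mul hq0.le,
      show q * ((q - 1) * (q * (q - 1) * (1 - Zavg W)))
        = (q * (q - 1)) ^ 2 * (1 - Zavg W) by ring,
      Real.sqrt_mul (sq_nonneg _), Real.sqrt_sq hqq0.le]
  calc symCap W ≤ q⁻¹ * ∑ x, ∑ x' ∈ univ.filter (· ≠ x), 2 * Real.sqrt (1 - B x x') := step1
    _ = q⁻¹ * 2 * ∑ x, ∑ x' ∈ univ.filter (· ≠ x), Real.sqrt (1 - B x x') := by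
        rw [mul_assoc]
        congr 1
        rw [Finset.mul_sum]
        exact Finset.sum_congr rfl fun x _ => (Finset.mul_sum _ _ _).symm
    _ ≤ q⁻¹ * 2 * (Real.sqrt q * Real.sqrt ((q - 1) * ∑ x, R x)) := by
        apply mul_le_mul_of_nonneg_left _ (by positivity)
        exact le_trans (Finset.sum_le_sum fun x _ => inner x) outer
    _ = q⁻¹ * 2 * (q * (q - 1) * Real.sqrt (1 - Zavg W)) := by rw [hsumR, halg]
    _ = 2 * (q - 1) * Real.sqrt (1 - Zavg W) := by field_simp
    _ ≤ 2 * (q - 1) * Real.sqrt (1 - Zavg W ^ 2) := by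
        apply mul_le_mul_of_nonneg_left (Real.sqrt_le_sqrt (by nlinarith)) (by linarith)
end

section
/- Genie-aided bound: For a q-ary input channel W, I(W) ≤ log(q/2) + (1/(q(q-1))) Σ_{x1≠x2} I(W_{{x1,x2}}), where W_{{x1,x2}} is the binary-input channel obtained by restricting the input alphabet of W to {x1, x2}, and all mutual informations are computed with uniform inputs (natural logarithm). -/
open Finset

/-- Symmetric capacity (in nats) of the binary-input channel obtained by restricting
the input alphabet of `W` to `{x1, x2}`, with uniform `(1/2, 1/2)` input. -/
noncomputable def symCapPair {X Y : Type*} [Fintype Y] (W : X → Y → ℝ) (x1 x2 : X) : ℝ :=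
  ∑ y, ((1 / 2 : ℝ) * W x1 y * Real.log (W x1 y / ((1 / 2 : ℝ) * (W x1 y + W x2 y))) +
        (1 / 2 : ℝ) * W x2 y * Real.log (W x2 y / ((1 / 2 : ℝ) * (W x1 y + W x2 y))))

/-- Genie-aided bound:
`I(W) ≤ log(q/2) + (1/(q(q-1))) ∑_{x1 ≠ x2} I(W_{{x1,x2}})`. -/
theorem symCap_le_genie {X Y : Type*} [Fintype X] [Fintype Y] [DecidableEq X]
    (W : X → Y → ℝ) (hq : 2 ≤ Fintype.card X)
    (hnn : ∀ x y, 0 ≤ W x y) (hsum : ∀ x, ∑ y, W x y = 1) :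
    symCap W ≤ Real.log ((Fintype.card X : ℝ) / 2) +
      ((Fintype.card X : ℝ) * ((Fintype.card X : ℝ) - 1))⁻¹ *
        ∑ x1, ∑ x2 ∈ univ.filter (· ≠ x1), symCapPair W x1 x2 := by
  set q : ℝ := (Fintype.card X : ℝ) with hq'
  have hq2 : (2:ℝ) ≤ q := by rw [hq']; exact_mod_cast hq
  have hq0 : (0:ℝ) < q := by linarith
  have hqm : (0:ℝ) < q - 1 := by linarith
  set c : ℝ := (q * (q - 1))⁻¹ with hc
  have hc0 : (0:ℝ) ≤ c := by rw [hc]; positivity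
  have hcard : ∀ x : X, ((univ.filter (· ≠ x)).card : ℝ) = q - 1 := by
    intro x
    rw [Finset.filter_ne', Finset.card_erase_of_mem (Finset.mem_univ x), Finset.card_univ]
    have h1 : 1 ≤ Fintype.card X := by omega
    rw [Nat.cast_sub h1, Nat.cast_one, ← hq']
  set A : X → X → ℝ := fun x1 x2 =>
    ∑ y, W x1 y * Real.log (W x1 y / ((1/2 : ℝ) * (W x1 y + W x2 y))) with hA
  -- swap lemma for sums over distinct pairs
  have hswap : ∀ g : X → X → ℝ,
      ∑ x1, ∑ x2 ∈ univ.filter (· ≠ x1), g x2 x1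
        = ∑ x1, ∑ x2 ∈ univ.filter (· ≠ x1), g x1 x2 := by
    intro g
    simp only [Finset.sum_filter]
    rw [Finset.sum_comm]
    refine Finset.sum_congr rfl fun a _ => Finset.sum_congr rfl fun b _ => ?_
    rcases eq_or_ne a b with h | h
    · simp [h]
    · simp [h, h.symm]
  have hS : ∑ x1, ∑ x2 ∈ univ.filter (· ≠ x1), symCapPair W x1 x2
      = ∑ x1, ∑ x2 ∈ univ.filter (· ≠ x1), A x1 x2 := by
    have hpair : ∀ x1 x2 : X, symCapPair W x1 x2
        = (1/2 : ℝ) * A x1 x2 + (1/2 : ℝ) * A x2 x1 := by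
      intro x1 x2
      rw [symCapPair, hA]
      simp only
      rw [Finset.mul_sum, Finset.mul_sum, ← Finset.sum_add_distrib]
      refine Finset.sum_congr rfl fun y _ => ?_
      rw [add_comm (W x2 y) (W x1 y)]
      ring
    simp only [hpair, Finset.sum_add_distrib, ← Finset.mul_sum]
    rw [hswap A]
    ring
  rw [hS]
  -- the key pointwise inequality
  have key : ∀ x y, q⁻¹ * W x y * Real.log (W x y / (q⁻¹ * ∑ x', W x' y))
      ≤ q⁻¹ * Real.log (q/2) * W x y
        + c * ∑ x2 ∈ univ.filter (· ≠ x),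
            W x y * Real.log (W x y / ((1/2 : ℝ) * (W x y + W x2 y))) := by
    intro x y
    rcases eq_or_lt_of_le (hnn x y) with hw | hw
    · simp [← hw]
    · set w := W x y with hw'
      set t : ℝ := ∑ x', W x' y with ht'
      have hwt : w ≤ t := Finset.single_le_sum (fun i _ => hnn i y) (Finset.mem_univ x)
      have ht0 : (0:ℝ) < t := lt_of_lt_of_le hw hwt
      set F := univ.filter (· ≠ x) with hF
      have hL : ∑ x2 ∈ F, Real.log (w + W x2 y) ≤ (q - 1) * Real.log t := by
        have hterm : ∀ x2 ∈ F, Real.log (w + W x2 y) ≤ Real.log t + ((w + W x2 y) / t - 1) := by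
          intro x2 _
          have h1 : 0 < w + W x2 y := by have := hnn x2 y; linarith
          have h2 := Real.log_le_sub_one_of_pos (div_pos h1 ht0)
          rw [Real.log_div h1.ne' ht0.ne'] at h2
          linarith
        have hsum2 : ∑ x2 ∈ F, (w + W x2 y) ≤ (q - 1) * t := by
          have e1 : ∑ x2 ∈ F, (w + W x2 y) = (q - 1) * w + (t - w) := by
            rw [Finset.sum_add_distrib, Finset.sum_const, nsmul_eq_mul, hcard x]
            congr 1
            rw [hF, Finset.filter_ne', Finset.sum_erase_eq_sub (Finset.mem_univ x)]
          nlinarith [hwt, hq2]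
        calc ∑ x2 ∈ F, Real.log (w + W x2 y)
            ≤ ∑ x2 ∈ F, (Real.log t + ((w + W x2 y) / t - 1)) := Finset.sum_le_sum hterm
          _ = (q - 1) * Real.log t + ((∑ x2 ∈ F, (w + W x2 y)) / t - (q - 1)) := by
              rw [Finset.sum_add_distrib, Finset.sum_const, nsmul_eq_mul, hcard x,
                Finset.sum_sub_distrib, Finset.sum_const, nsmul_eq_mul, hcard x,
                ← Finset.sum_div]
              ring
          _ ≤ (q - 1) * Real.log t := by
              have hd : (∑ x2 ∈ F, (w + W x2 y)) / t ≤ q - 1 := by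
                rw [div_le_iff₀ ht0]; linarith [hsum2]
              linarith
      have hinner : ∑ x2 ∈ F, w * Real.log (w / ((1/2 : ℝ) * (w + W x2 y)))
          = w * ((q - 1) * (Real.log w + Real.log 2) - ∑ x2 ∈ F, Real.log (w + W x2 y)) := by
        rw [← Finset.mul_sum]
        congr 1
        have hlm : ∀ x2 ∈ F, Real.log (w / ((1/2 : ℝ) * (w + W x2 y)))
            = (Real.log w + Real.log 2) - Real.log (w + W x2 y) := by
          intro x2 _
          have h1 : 0 < w + W x2 y := by have := hnn x2 y; linarith
          have h3 : ((1/2 : ℝ) * (w + W x2 y)) ≠ 0 := by positivity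
          rw [Real.log_div hw.ne' h3, Real.log_mul (by norm_num) h1.ne', one_div, Real.log_inv]
          ring
        rw [Finset.sum_congr rfl hlm, Finset.sum_sub_distrib, Finset.sum_const, nsmul_eq_mul,
          hcard x]
      have hlogL : Real.log (w / (q⁻¹ * t)) = Real.log w - Real.log t + Real.log q := by
        have h1 : q⁻¹ * t ≠ 0 := by positivity
        rw [Real.log_div hw.ne' h1, Real.log_mul (by positivity) ht0.ne', Real.log_inv]
        ring
      have hlogq : Real.log (q / 2) = Real.log q - Real.log 2 :=
        Real.log_div hq0.ne' two_ne_zero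
      rw [hlogL, hlogq, hinner]
      set L := ∑ x2 ∈ F, Real.log (w + W x2 y) with hLdef
      have hkey : q⁻¹ * w * (Real.log w - Real.log t + Real.log q)
          + c * (w * ((q - 1) * Real.log t - L))
          = q⁻¹ * (Real.log q - Real.log 2) * w
            + c * (w * ((q - 1) * (Real.log w + Real.log 2) - L)) := by
        rw [hc]
        field_simp
        ring
      have hpos : 0 ≤ c * (w * ((q - 1) * Real.log t - L)) :=
        mul_nonneg hc0 (mul_nonneg hw.le (by linarith [hL]))
      linarith [hkey, hpos]
  have h1 : symCap W = ∑ x, ∑ y, q⁻¹ * W x y * Real.log (W x y / (q⁻¹ * ∑ x', W x' y)) := by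
    simp only [symCap, hq']
  rw [h1]
  have hstep : ∀ x : X, ∑ y, q⁻¹ * W x y * Real.log (W x y / (q⁻¹ * ∑ x', W x' y))
      ≤ q⁻¹ * Real.log (q/2) + c * ∑ x2 ∈ univ.filter (· ≠ x), A x x2 := by
    intro x
    calc ∑ y, q⁻¹ * W x y * Real.log (W x y / (q⁻¹ * ∑ x', W x' y))
        ≤ ∑ y, (q⁻¹ * Real.log (q/2) * W x y
          + c * ∑ x2 ∈ univ.filter (· ≠ x),
              W x y * Real.log (W x y / ((1/2 : ℝ) * (W x y + W x2 y)))) :=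
          Finset.sum_le_sum fun y _ => key x y
      _ = q⁻¹ * Real.log (q/2) * ∑ y, W x y
          + c * ∑ y, ∑ x2 ∈ univ.filter (· ≠ x),
              W x y * Real.log (W x y / ((1/2 : ℝ) * (W x y + W x2 y))) := by
          rw [Finset.sum_add_distrib, ← Finset.mul_sum, ← Finset.mul_sum]
      _ = q⁻¹ * Real.log (q/2) + c * ∑ x2 ∈ univ.filter (· ≠ x), A x x2 := by
          rw [hsum x, mul_one, Finset.sum_comm]
  calc ∑ x, ∑ y, q⁻¹ * W x y * Real.log (W x y / (q⁻¹ * ∑ x', W x' y))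
      ≤ ∑ x : X, (q⁻¹ * Real.log (q/2) + c * ∑ x2 ∈ univ.filter (· ≠ x), A x x2) :=
        Finset.sum_le_sum fun x _ => hstep x
    _ = q * (q⁻¹ * Real.log (q/2)) + c * ∑ x1, ∑ x2 ∈ univ.filter (· ≠ x1), A x1 x2 := by
        rw [Finset.sum_add_distrib, Finset.sum_const, Finset.card_univ, nsmul_eq_mul,
          ← Finset.mul_sum, ← hq']
    _ = Real.log (q/2) + c * ∑ x1, ∑ x2 ∈ univ.filter (· ≠ x1), A x1 x2 := by
        rw [← mul_assoc, mul_inv_cancel₀ hq0.ne', one_mul]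
end

section
/- Let (Ω,F,P) carry i.i.d. fair ±-valued random variables B₁,B₂,…, with filtration F_n = σ(B₁,…,B_n). Suppose {I_n} and {T_n} are [0,1]-valued F_n-adapted processes such that {I_n} is a martingale, T_{n+1} = T_n² whenever B_{n+1} = +, and for every ε > 0 there exists δ > 0 such that I_n ∈ (ε, 1−ε) implies T_n ∈ (δ, 1−δ). Then I_n converges almost surely to a random variable I_∞ taking values in {0,1}, and P(I_∞ = 1) = I₀. -/
/-!
By the martingale convergence theorem the bounded martingale `I n` converges a.s. to a limit
`I∞`, and by dominated convergence `E I∞ = I₀`. If `I∞ ∈ (0, 1)`, then `I n`, hence `T n`, stays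
eventually in some `(δ, 1 - δ)`. But `k` consecutive `+` coins square `T` `k` times, which pushes
it below `δ` once `(1 - δ) ^ 2 ^ k < δ`; and by Borel–Cantelli, applied to disjoint blocks of `k`
coins, such runs occur infinitely often a.s. So `I∞ ∈ {0, 1}` a.s., and then
`P (I∞ = 1) = E I∞ = I₀`.
-/

open MeasureTheory Filter ProbabilityTheory Set
open scoped ENNReal

section Coins

variable {Ω : Type*} [MeasurableSpace Ω] {P : Measure Ω} {B : ℕ → Ω → Bool} {p : ℝ≥0∞}

lemma measure_biInter_eq_true_eq_pow (hindep : iIndepFun B P)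
    (hp : ∀ n, P {ω | B n ω = true} = p) (S : Finset ℕ) :
    P (⋂ i ∈ S, {ω | B i ω = true}) = p ^ S.card := by
  rw [← Finset.prod_const, ← Finset.prod_congr rfl fun i _ => hp i]
  exact hindep.measure_inter_preimage_eq_mul S fun _ _ => measurableSet_singleton true

def allTrueOnBlock (B : ℕ → Ω → Bool) (k b : ℕ) : Set Ω :=
  ⋂ i ∈ Finset.Ico (b * k) (b * k + k), {ω | B i ω = true}

lemma measurableSet_allTrueOnBlock (hmeas : ∀ n, Measurable (B n)) (k b : ℕ) :
    MeasurableSet (allTrueOnBlock B k b) :=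
  Finset.measurableSet_biInter _ fun i _ => hmeas i (measurableSet_singleton true)

lemma disjoint_Ico_block {k b₁ b₂ : ℕ} (h : b₁ ≠ b₂) :
    Disjoint (Finset.Ico (b₁ * k) (b₁ * k + k)) (Finset.Ico (b₂ * k) (b₂ * k + k)) := by
  wlog hlt : b₁ < b₂ generalizing b₁ b₂
  · exact (this h.symm (h.lt_or_gt.resolve_left hlt)).symm
  have : b₁ * k + k ≤ b₂ * k := by simpa [add_mul] using Nat.mul_le_mul_right k hlt
  simp only [Finset.disjoint_left, Finset.mem_Ico]
  omega

lemma measure_allTrueOnBlock (hindep : iIndepFun B P) (hp : ∀ n, P {ω | B n ω = true} = p)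
    (k b : ℕ) : P (allTrueOnBlock B k b) = p ^ k := by
  rw [allTrueOnBlock, measure_biInter_eq_true_eq_pow hindep hp, Nat.card_Ico,
    Nat.add_sub_cancel_left]

lemma iIndepSet_allTrueOnBlock (hmeas : ∀ n, Measurable (B n)) (hindep : iIndepFun B P)
    (hp : ∀ n, P {ω | B n ω = true} = p) (k : ℕ) :
    iIndepSet (allTrueOnBlock B k) P := by
  classical
  rw [iIndepSet_iff_meas_biInter (measurableSet_allTrueOnBlock hmeas k)]
  intro J
  have hunion : (⋂ b ∈ J, allTrueOnBlock B k b) =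
      ⋂ i ∈ J.biUnion (fun b => Finset.Ico (b * k) (b * k + k)), {ω | B i ω = true} := by
    rw [Finset.set_biInter_biUnion]; rfl
  have hcard : (J.biUnion fun b => Finset.Ico (b * k) (b * k + k)).card = J.card * k := by
    rw [Finset.card_biUnion fun _ _ _ _ h => disjoint_Ico_block h]
    simp
  rw [hunion, measure_biInter_eq_true_eq_pow hindep hp, hcard,
    Finset.prod_congr rfl fun b _ => measure_allTrueOnBlock hindep hp k b, Finset.prod_const,
    ← pow_mul, mul_comm]

lemma ae_frequently_mem_allTrueOnBlock (hmeas : ∀ n, Measurable (B n)) (hindep : iIndepFun B P)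
    (hp : ∀ n, P {ω | B n ω = true} = p) (hp0 : p ≠ 0) (k : ℕ) :
    ∀ᵐ ω ∂P, ∃ᶠ b in atTop, ω ∈ allTrueOnBlock B k b := by
  have hind := iIndepSet_allTrueOnBlock hmeas hindep hp k
  have : IsProbabilityMeasure P := hind.isProbabilityMeasure
  have hlimsup : P (limsup (allTrueOnBlock B k) atTop) = 1 :=
    measure_limsup_eq_one (measurableSet_allTrueOnBlock hmeas k) hind <| by
      simpa only [measure_allTrueOnBlock hindep hp] using
        ENNReal.tsum_const_eq_top_of_ne_zero (pow_ne_zero k hp0)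
  have hae : limsup (allTrueOnBlock B k) atTop ∈ ae P := mem_ae_iff.2 <|
    (prob_compl_eq_zero_iff
      (MeasurableSet.measurableSet_limsup (measurableSet_allTrueOnBlock hmeas k))).2 hlimsup
  filter_upwards [hae] with ω hω
  exact mem_limsup_iff_frequently_mem.1 hω

end Coins

lemma pow_two_pow_of_eq_sq {M : Type*} [Monoid M] {t : ℕ → M} {n : ℕ} :
    ∀ k, (∀ i ∈ Finset.Ico n (n + k), t (i + 1) = t i ^ 2) → t (n + k) = t n ^ 2 ^ k
  | 0, _ => by simp
  | k + 1, h => by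
    have hk : t (n + k) = t n ^ 2 ^ k :=
      pow_two_pow_of_eq_sq k fun i hi => h i (Finset.Ico_subset_Ico_right (by omega) hi)
    rw [← add_assoc, h (n + k) (by simp), hk, ← pow_mul, pow_succ]

section Squaring

variable {Ω : Type*} [MeasurableSpace Ω] {P : Measure Ω} {B : ℕ → Ω → Bool} {p : ℝ≥0∞}
  {T : ℕ → Ω → ℝ}

lemma ae_not_eventually_mem_Ioo (hmeas : ∀ n, Measurable (B n)) (hindep : iIndepFun B P)
    (hp : ∀ n, P {ω | B n ω = true} = p) (hp0 : p ≠ 0) (hT0 : ∀ n ω, 0 ≤ T n ω)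
    (hTsq : ∀ n ω, B n ω = true → T (n + 1) ω = T n ω ^ 2) {δ : ℝ} (hδ0 : 0 < δ) (hδ1 : δ < 1) :
    ∀ᵐ ω ∂P, ¬ ∀ᶠ n in atTop, T n ω ∈ Ioo δ (1 - δ) := by
  obtain ⟨N, hN⟩ := exists_pow_lt_of_lt_one hδ0 (by linarith : 1 - δ < 1)
  have hsmall : (1 - δ) ^ 2 ^ (N + 1) < δ :=
    (pow_le_pow_of_le_one (by linarith) (by linarith) (Nat.lt_two_pow_self.le.trans
      (Nat.pow_le_pow_right two_pos N.le_succ))).trans_lt hN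
  filter_upwards [ae_frequently_mem_allTrueOnBlock hmeas hindep hp hp0 (N + 1)] with ω hrun hmid
  obtain ⟨M, hM⟩ := eventually_atTop.1 hmid
  obtain ⟨b, hbM, hb⟩ := frequently_atTop.1 hrun M
  set n := b * (N + 1)
  have hnM : M ≤ n := hbM.trans (Nat.le_mul_of_pos_right b N.succ_pos)
  have hpow : T (n + (N + 1)) ω = T n ω ^ 2 ^ (N + 1) :=
    pow_two_pow_of_eq_sq (t := fun i => T i ω) (N + 1) fun i hi =>
      hTsq i ω (by simpa using mem_iInter₂.1 hb i hi)
  have hstart := hM n hnM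
  have hend := hM (n + (N + 1)) (by omega)
  rw [hpow] at hend
  have : T n ω ^ 2 ^ (N + 1) ≤ (1 - δ) ^ 2 ^ (N + 1) :=
    pow_le_pow_left₀ (hT0 n ω) hstart.2.le _
  linarith [hend.1]

lemma ae_forall_not_eventually_mem_Ioo (hmeas : ∀ n, Measurable (B n))
    (hindep : iIndepFun B P) (hp : ∀ n, P {ω | B n ω = true} = p) (hp0 : p ≠ 0)
    (hT0 : ∀ n ω, 0 ≤ T n ω) (hTsq : ∀ n ω, B n ω = true → T (n + 1) ω = T n ω ^ 2) :
    ∀ᵐ ω ∂P, ∀ δ > 0, ¬ ∀ᶠ n in atTop, T n ω ∈ Ioo δ (1 - δ) := by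
  have hδ : ∀ j : ℕ, (0 : ℝ) < 1 / (j + 2) ∧ (1 : ℝ) / (j + 2) < 1 := fun j =>
    ⟨by positivity, by rw [div_lt_one (by positivity)]; linarith [j.cast_nonneg (α := ℝ)]⟩
  filter_upwards [ae_all_iff.2 fun j => ae_not_eventually_mem_Ioo hmeas hindep hp hp0 hT0 hTsq
    (hδ j).1 (hδ j).2] with ω hω δ hδpos hmid
  obtain ⟨j, hj⟩ := exists_nat_one_div_lt hδpos
  have hjδ : (1 : ℝ) / (j + 2) < δ :=
    lt_of_le_of_lt (one_div_le_one_div_of_le (by positivity) (by linarith)) hj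
  exact hω j (hmid.mono fun n hn => ⟨hjδ.trans hn.1, by linarith [hn.2]⟩)

end Squaring

lemma eq_zero_or_eq_one_of_tendsto {x t : ℕ → ℝ} {L : ℝ} (hx : Tendsto x atTop (nhds L))
    (hx01 : ∀ n, x n ∈ Icc (0 : ℝ) 1)
    (hxt : ∀ ε > (0 : ℝ), ∃ δ > (0 : ℝ), ∀ n, x n ∈ Ioo ε (1 - ε) → t n ∈ Ioo δ (1 - δ))
    (ht : ∀ δ > 0, ¬ ∀ᶠ n in atTop, t n ∈ Ioo δ (1 - δ)) :
    L = 0 ∨ L = 1 := by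
  have hL : L ∈ Icc (0 : ℝ) 1 := isClosed_Icc.mem_of_tendsto hx (Eventually.of_forall hx01)
  by_contra! hne
  have hL0 : 0 < L := lt_of_le_of_ne hL.1 hne.1.symm
  have hL1 : L < 1 := lt_of_le_of_ne hL.2 hne.2
  set ε := min L (1 - L) / 2 with hεdef
  have hε : 0 < ε := by positivity
  have hLε : L ∈ Ioo ε (1 - ε) := by
    constructor <;> linarith [min_le_left L (1 - L), min_le_right L (1 - L)]
  obtain ⟨δ, hδ, hxtδ⟩ := hxt ε hε
  exact ht δ hδ ((hx.eventually (Ioo_mem_nhds hLε.1 hLε.2)).mono hxtδ)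

section Martingale

variable {Ω : Type*} [MeasurableSpace Ω] {μ : Measure Ω} [IsFiniteMeasure μ]
  {ℱ : Filtration ℕ ‹_›} {f : ℕ → Ω → ℝ} {C : ℝ}

lemma MeasureTheory.Martingale.ae_tendsto_limitProcess_of_norm_le (hf : Martingale f ℱ μ)
    (hC : ∀ n ω, ‖f n ω‖ ≤ C) :
    ∀ᵐ ω ∂μ, Tendsto (fun n => f n ω) atTop (nhds (ℱ.limitProcess f μ ω)) := by
  refine hf.submartingale.ae_tendsto_limitProcess
    (R := (μ univ * ENNReal.ofReal C).toNNReal) fun n => ?_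
  rw [ENNReal.coe_toNNReal (by finiteness)]
  simpa using eLpNorm_le_of_ae_bound (p := 1) (Eventually.of_forall (hC n))

lemma MeasureTheory.Martingale.integral_limitProcess_of_norm_le (hf : Martingale f ℱ μ)
    (hC : ∀ n ω, ‖f n ω‖ ≤ C) :
    ∫ ω, ℱ.limitProcess f μ ω ∂μ = ∫ ω, f 0 ω ∂μ := by
  have hconst : ∀ n, ∫ ω, f n ω ∂μ = ∫ ω, f 0 ω ∂μ := fun n => by
    simpa using (hf.setIntegral_eq (Nat.zero_le n) MeasurableSet.univ).symm
  refine tendsto_nhds_unique (tendsto_integral_of_dominated_convergence (fun _ => C)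
    (fun n => (hf.integrable n).aestronglyMeasurable) (integrable_const C)
    (fun n => Eventually.of_forall (hC n)) (hf.ae_tendsto_limitProcess_of_norm_le hC)) ?_
  simpa only [hconst] using tendsto_const_nhds

lemma measure_eq_one_eq_ofReal_integral {g : Ω → ℝ} (hg : Measurable g)
    (h01 : ∀ᵐ ω ∂μ, g ω = 0 ∨ g ω = 1) :
    μ {ω | g ω = 1} = ENNReal.ofReal (∫ ω, g ω ∂μ) := by
  have hS : MeasurableSet {ω | g ω = 1} := hg (measurableSet_singleton 1)
  have hind : g =ᵐ[μ] {ω | g ω = 1}.indicator 1 := by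
    filter_upwards [h01] with ω hω
    rcases hω with h | h <;> simp [indicator, h]
  rw [integral_congr_ae hind, integral_indicator_one hS, measureReal_def,
    ENNReal.ofReal_toReal (measure_ne_top _ _)]

end Martingale

theorem polarization_martingale_convergence_general
    {Ω : Type*} [m : MeasurableSpace Ω] (P : Measure Ω) [IsProbabilityMeasure P]
    (B : ℕ → Ω → Bool) (hmeas : ∀ n, Measurable (B n))
    (hindep : ProbabilityTheory.iIndepFun B P)
    (hfair : ∀ n, P {ω | B n ω = true} = 1 / 2)
    (F : Filtration ℕ m)
    (I T : ℕ → Ω → ℝ)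
    (hI01 : ∀ n ω, I n ω ∈ Set.Icc (0 : ℝ) 1)
    (hImart : Martingale I F P)
    (hT01 : ∀ n ω, T n ω ∈ Set.Icc (0 : ℝ) 1)
    (hTsq : ∀ n ω, B n ω = true → T (n + 1) ω = T n ω ^ 2)
    (hIT : ∀ ε > (0 : ℝ), ∃ δ > (0 : ℝ), ∀ n ω,
      I n ω ∈ Set.Ioo ε (1 - ε) → T n ω ∈ Set.Ioo δ (1 - δ))
    (I0 : ℝ) (hI0 : ∀ ω, I 0 ω = I0) :
    ∃ Ilim : Ω → ℝ,
      (∀ᵐ ω ∂P, Tendsto (fun n => I n ω) atTop (nhds (Ilim ω))) ∧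
      (∀ᵐ ω ∂P, Ilim ω = 0 ∨ Ilim ω = 1) ∧
      P {ω | Ilim ω = 1} = ENNReal.ofReal I0 := by
  have hbdd : ∀ n ω, ‖I n ω‖ ≤ 1 := fun n ω => by
    rw [Real.norm_eq_abs, abs_le]
    exact ⟨by linarith [(hI01 n ω).1], (hI01 n ω).2⟩
  have htend := hImart.ae_tendsto_limitProcess_of_norm_le hbdd
  have h01 : ∀ᵐ ω ∂P, F.limitProcess I P ω = 0 ∨ F.limitProcess I P ω = 1 := by
    filter_upwards [htend, ae_forall_not_eventually_mem_Ioo hmeas hindep hfair (by simp)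
      (fun n ω => (hT01 n ω).1) hTsq] with ω hω hTω
    exact eq_zero_or_eq_one_of_tendsto hω (fun n => hI01 n ω)
      (fun ε hε => (hIT ε hε).imp fun _ ⟨hδ, h⟩ => ⟨hδ, fun n => h n ω⟩) hTω
  refine ⟨F.limitProcess I P, htend, h01, ?_⟩
  rw [measure_eq_one_eq_ofReal_integral
      (F.stronglyMeasurable_limitProcess.measurable.mono (iSup_le F.le) le_rfl) h01,
    hImart.integral_limitProcess_of_norm_le hbdd]
  simp [hI0]

/-- Polarization martingale convergence (Lemma 2 of the paper): if `{I_n}` is a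
`[0,1]`-valued martingale adapted to the filtration generated by i.i.d. fair
`{+,-}`-valued variables `B₀, B₁, …`, and `{T_n}` is a `[0,1]`-valued adapted process
with `T_{n+1} = T_n²` whenever the next coin is `+`, such that `I_n` bounded away from
`0` and `1` forces `T_n` bounded away from `0` and `1`, then `I_n` converges a.s. to a
`{0,1}`-valued limit `I_∞` with `P(I_∞ = 1) = I₀`. -/
theorem polarization_martingale_convergence
    {Ω : Type*} [m : MeasurableSpace Ω] (P : Measure Ω) [IsProbabilityMeasure P]
    (B : ℕ → Ω → Bool) (hmeas : ∀ n, Measurable (B n))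
    (hindep : ProbabilityTheory.iIndepFun B P)
    (hfair : ∀ n, P {ω | B n ω = true} = 1 / 2)
    (F : Filtration ℕ m)
    (hF : ∀ n, F n = ⨆ i ∈ Finset.range n, MeasurableSpace.comap (B i) ⊤)
    (I T : ℕ → Ω → ℝ)
    (hI01 : ∀ n ω, I n ω ∈ Set.Icc (0 : ℝ) 1)
    (hImart : Martingale I F P)
    (hT01 : ∀ n ω, T n ω ∈ Set.Icc (0 : ℝ) 1)
    (hTadapted : Adapted F T)
    (hTsq : ∀ n ω, B n ω = true → T (n + 1) ω = T n ω ^ 2)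
    (hIT : ∀ ε > (0 : ℝ), ∃ δ > (0 : ℝ), ∀ n ω,
      I n ω ∈ Set.Ioo ε (1 - ε) → T n ω ∈ Set.Ioo δ (1 - δ))
    (I0 : ℝ) (hI0 : ∀ ω, I 0 ω = I0) :
    ∃ Ilim : Ω → ℝ,
      (∀ᵐ ω ∂P, Tendsto (fun n => I n ω) atTop (nhds (Ilim ω))) ∧
      (∀ᵐ ω ∂P, Ilim ω = 0 ∨ Ilim ω = 1) ∧
      P {ω | Ilim ω = 1} = ENNReal.ofReal I0 :=
  polarization_martingale_convergence_general (m := m) P B hmeas hindep hfair F I T hI01 hImart hT01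
    hTsq hIT I0 hI0
end

section
/- Let X = ℤ/qℤ and W : X → Y a channel. Define W⁺(y₁,y₂,u₁ | u₂) = (1/q)·W(y₁ | u₁+u₂)·W(y₂ | u₂). Then for every d ≠ 0, Z_d(W⁺) = Z_d(W)², where Z_d(V) = (1/q) Σ_x Σ_outputs √(V(·|x)V(·|x+d)). Consequently Z_max(W⁺) = Z_max(W)². -/
open Finset

/-- `Z_d(V) = (1/q) ∑_x ∑_outputs √(V(·|x) V(·|x+d))` for a channel with input `ZMod q`. -/
noncomputable def Zd {q : ℕ} {B : Type*} [NeZero q] [Fintype B]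
    (V : ZMod q → B → ℝ) (d : ZMod q) : ℝ :=
  (q : ℝ)⁻¹ * ∑ x, ∑ b, Real.sqrt (V x b * V (x + d) b)

/-- `Z_max(V) = max_{d ≠ 0} Z_d(V)`. -/
noncomputable def Zmax {q : ℕ} {B : Type*} [NeZero q] [Fintype B]
    (V : ZMod q → B → ℝ) : ℝ :=
  ⨆ d : {d : ZMod q // d ≠ 0}, Zd V d.1

/-- The "plus" Arıkan transform: `W⁺(y₁,y₂,u₁ | u₂) = (1/q) W(y₁|u₁+u₂) W(y₂|u₂)`. -/
noncomputable def Wplus {q : ℕ} {Y : Type*} (W : ZMod q → Y → ℝ) :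
    ZMod q → Y × Y × ZMod q → ℝ :=
  fun u2 p => (q : ℝ)⁻¹ * W (p.2.2 + u2) p.1 * W u2 p.2.1

/-- For every `d ≠ 0`, `Z_d(W⁺) = Z_d(W)²`; consequently `Z_max(W⁺) = Z_max(W)²`. -/
theorem Zd_Wplus_eq_sq {q : ℕ} [NeZero q] (hq : 2 ≤ q)
    {Y : Type*} [Fintype Y] (W : ZMod q → Y → ℝ)
    (hnn : ∀ x y, 0 ≤ W x y) (hsum : ∀ x, ∑ y, W x y = 1) :
    (∀ d : ZMod q, d ≠ 0 → Zd (Wplus W) d = Zd W d ^ 2) ∧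
      Zmax (Wplus W) = Zmax W ^ 2 := by
  have key : ∀ d : ZMod q, Zd (Wplus W) d = Zd W d ^ 2 := by
    intro d
    set F : ZMod q → Y → ℝ := fun a y => Real.sqrt (W a y * W (a + d) y) with hF
    set S : ℝ := ∑ x, ∑ y, F x y with hS
    have hterm : ∀ (x : ZMod q) (p : Y × Y × ZMod q),
        Real.sqrt (Wplus W x p * Wplus W (x + d) p)
          = (q : ℝ)⁻¹ * (F (p.2.2 + x) p.1 * F x p.2.1) := by
      intro x p
      obtain ⟨y1, y2, u1⟩ := p
      simp only [Wplus, hF]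
      rw [show u1 + (x + d) = (u1 + x) + d by ring]
      rw [show (q:ℝ)⁻¹ * W (u1 + x) y1 * W x y2 * ((q:ℝ)⁻¹ * W (u1 + x + d) y1 * W (x + d) y2)
          = ((q:ℝ)⁻¹)^2 * ((W (u1 + x) y1 * W (u1 + x + d) y1) * (W x y2 * W (x + d) y2)) by ring]
      rw [Real.sqrt_mul (by positivity), Real.sqrt_mul (mul_nonneg (hnn _ _) (hnn _ _)),
        Real.sqrt_sq (by positivity)]
    have hshift : ∀ x : ZMod q, (∑ u1 : ZMod q, ∑ y1 : Y, F (u1 + x) y1) = S := by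
      intro x
      rw [hS]
      exact Fintype.sum_equiv (Equiv.addRight x) _ _ (fun u1 => rfl)
    have hx : ∀ x : ZMod q, (∑ p : Y × Y × ZMod q, F (p.2.2 + x) p.1 * F x p.2.1)
        = (∑ u1 : ZMod q, ∑ y1 : Y, F (u1 + x) y1) * (∑ y2, F x y2) := by
      intro x
      simp only [Fintype.sum_prod_type]
      rw [Finset.sum_mul_sum]
      simp only [Finset.sum_mul]
      calc (∑ y1 : Y, ∑ y2 : Y, ∑ u1 : ZMod q, F (u1 + x) y1 * F x y2)
          = ∑ y2 : Y, ∑ y1 : Y, ∑ u1 : ZMod q, F (u1 + x) y1 * F x y2 := Finset.sum_comm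
        _ = ∑ y2 : Y, ∑ u1 : ZMod q, ∑ y1 : Y, F (u1 + x) y1 * F x y2 :=
            Finset.sum_congr rfl fun _ _ => Finset.sum_comm
        _ = ∑ u1 : ZMod q, ∑ y2 : Y, ∑ y1 : Y, F (u1 + x) y1 * F x y2 := Finset.sum_comm
    calc Zd (Wplus W) d
        = (q : ℝ)⁻¹ * ∑ x, ∑ p : Y × Y × ZMod q,
            (q : ℝ)⁻¹ * (F (p.2.2 + x) p.1 * F x p.2.1) := by
          unfold Zd
          exact congrArg _ (Finset.sum_congr rfl fun x _ =>
            Finset.sum_congr rfl fun p _ => hterm x p)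
      _ = (q : ℝ)⁻¹ * ∑ x, (q : ℝ)⁻¹ *
            ((∑ u1 : ZMod q, ∑ y1 : Y, F (u1 + x) y1) * (∑ y2, F x y2)) := by
          congr 1
          refine Finset.sum_congr rfl fun x _ => ?_
          rw [← Finset.mul_sum, hx]
      _ = (q : ℝ)⁻¹ * ∑ x, (q : ℝ)⁻¹ * (S * (∑ y2, F x y2)) := by
          congr 1
          exact Finset.sum_congr rfl fun x _ => by rw [hshift]
      _ = ((q : ℝ)⁻¹ * S) * ((q : ℝ)⁻¹ * S) := by
          simp only [← Finset.mul_sum]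
          rw [← hS]
          ring
      _ = Zd W d ^ 2 := by rw [Zd]; ring
  refine ⟨fun d _ => key d, ?_⟩
  haveI : Fact (1 < q) := ⟨hq⟩
  haveI : Nonempty {d : ZMod q // d ≠ 0} := ⟨⟨1, one_ne_zero⟩⟩
  have hZnn : ∀ d : ZMod q, 0 ≤ Zd W d := by
    intro d
    unfold Zd
    have : (0:ℝ) ≤ ∑ x : ZMod q, ∑ b : Y, Real.sqrt (W x b * W (x + d) b) :=
      Finset.sum_nonneg fun x _ => Finset.sum_nonneg fun b _ => Real.sqrt_nonneg _
    positivity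
  obtain ⟨d0, hd0⟩ := Finite.exists_max fun d : {d : ZMod q // d ≠ 0} => Zd W d.1
  unfold Zmax
  have h1 : (⨆ d : {d : ZMod q // d ≠ 0}, Zd W d.1) = Zd W d0.1 :=
    le_antisymm (ciSup_le hd0) (le_ciSup (Finite.bddAbove_range fun d : {d : ZMod q // d ≠ 0} => Zd W d.1) d0)
  have h2 : (⨆ d : {d : ZMod q // d ≠ 0}, Zd (Wplus W) d.1) = Zd W d0.1 ^ 2 := by
    refine le_antisymm (ciSup_le fun d => ?_) ?_
    · rw [key d.1]
      exact pow_le_pow_left₀ (hZnn d.1) (hd0 d) 2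
    · rw [← key d0.1]
      exact le_ciSup (Finite.bddAbove_range fun d : {d : ZMod q // d ≠ 0} => Zd (Wplus W) d.1) d0
  rw [h1, h2]
end
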